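/- Let n ≥ 2 and let d, l be positive integers, and define 𝓟ⁿ_{d,l} = { V ∈ C(ℝⁿ, ℝ) : there exist polynomial functions V₁,…,V_l on ℝⁿ of degree at most d such that V(x) ∈ {V₁(x),…,V_l(x)} for every x ∈ ℝⁿ }. If 𝓟ⁿ_{d,l} is a universal class of Lyapunov functions (for n-dimensional switched systems), then 𝓟²_{d,l} is a universal class of Lyapunov functions (for 2-dimensional switched systems). -/

import Mathlib

open MeasureTheory Set
open scoped RealInnerProductSpace

noncomputable section

attribute [local instance] Matrix.normedAddCommGroup Matrix.normedSpace

local instance matrixMeasurableSpace {n : ℕ} :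
    MeasurableSpace (Matrix (Fin n) (Fin n) ℝ) :=
  inferInstanceAs (MeasurableSpace (Fin n → Fin n → ℝ))

/-- The space of `n × n` real matrices. -/
abbrev Mat (n : ℕ) := Matrix (Fin n) (Fin n) ℝ

/-- The state space `ℝⁿ` with its Euclidean structure. -/
abbrev Vec (n : ℕ) := EuclideanSpace ℝ (Fin n)

/-- Action of a matrix on a vector of Euclidean space. -/
def Mat.act {n : ℕ} (M : Mat n) (x : Vec n) : Vec n := Matrix.toEuclideanLin M x

/-- A switching law for the switched system `(Σ_𝓜)`: a measurable function taking values in `𝓜`. -/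
def IsSwitchingLaw {n : ℕ} (𝓜 : Set (Mat n)) (A : ℝ → Mat n) : Prop :=
  Measurable A ∧ ∀ t, 0 ≤ t → A t ∈ 𝓜

/-- `Φ` is the fundamental matrix `t ↦ Φ_A(t,0)` of the switching law `A`: the continuous
solution on `[0,∞)` of `Φ(t) = Id + ∫₀ᵗ A(s) Φ(s) ds`. -/
def IsFundamentalMatrix {n : ℕ} (A : ℝ → Mat n) (Φ : ℝ → Mat n) : Prop :=
  ContinuousOn Φ (Ici (0:ℝ)) ∧
  ∀ t, 0 ≤ t → Φ t = 1 + ∫ s in (0:ℝ)..t, A s * Φ s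

/-- Uniform stability of the switched system `(Σ_𝓜)`. -/
def UniformlyStable {n : ℕ} (𝓜 : Set (Mat n)) : Prop :=
  ∃ C > 0, ∀ A Φ : ℝ → Mat n, IsSwitchingLaw 𝓜 A → IsFundamentalMatrix A Φ →
    ∀ t, 0 ≤ t → ‖Φ t‖ ≤ C

/-- Uniform exponential stability of the switched system `(Σ_𝓜)`. -/
def UniformlyExpStable {n : ℕ} (𝓜 : Set (Mat n)) : Prop :=
  ∃ C > 0, ∃ γ > 0, ∀ A Φ : ℝ → Mat n, IsSwitchingLaw 𝓜 A → IsFundamentalMatrix A Φ →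
    ∀ t, 0 ≤ t → ‖Φ t‖ ≤ C * Real.exp (-γ * t)

/-- A nonstrict common Lyapunov function for `(Σ_𝓜)`: continuous, nonnegative, positive
definite, and non-increasing along every trajectory. -/
def IsNonstrictCLF {n : ℕ} (𝓜 : Set (Mat n)) (V : Vec n → ℝ) : Prop :=
  Continuous V ∧ (∀ x, 0 ≤ V x) ∧ V 0 = 0 ∧ (∀ x, x ≠ 0 → 0 < V x) ∧
  ∀ A Φ : ℝ → Mat n, IsSwitchingLaw 𝓜 A → IsFundamentalMatrix A Φ → ∀ x₀ : Vec n,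
    AntitoneOn (fun t => V ((Φ t).act x₀)) (Ici 0)

/-- A (strict) common Lyapunov function for `(Σ_𝓜)`: a nonstrict one that is moreover
strictly decreasing along every nonzero trajectory. -/
def IsCLF {n : ℕ} (𝓜 : Set (Mat n)) (V : Vec n → ℝ) : Prop :=
  IsNonstrictCLF 𝓜 V ∧
  ∀ A Φ : ℝ → Mat n, IsSwitchingLaw 𝓜 A → IsFundamentalMatrix A Φ → ∀ x₀ : Vec n, x₀ ≠ 0 →
    StrictAntiOn (fun t => V ((Φ t).act x₀)) (Ici 0)

/-- A universal class of Lyapunov functions. -/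
def IsUniversalClass {n : ℕ} (P : Set (Vec n → ℝ)) : Prop :=
  ∀ 𝓜 : Set (Mat n), Bornology.IsBounded 𝓜 → UniformlyExpStable 𝓜 →
    ∃ V ∈ P, IsCLF 𝓜 V

/-- `V` is absolutely homogeneous of degree `α`. -/
def AbsHomog {n : ℕ} (α : ℝ) (V : Vec n → ℝ) : Prop :=
  ∀ (lam : ℝ) (x : Vec n), V (lam • x) = |lam| ^ α * V x

/-- The subdifferential of a convex function. -/
def subdiff {n : ℕ} (V : Vec n → ℝ) (x : Vec n) : Set (Vec n) :=
  {l | ∀ y, ⟪l, y - x⟫ ≤ V y - V x}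

/-- The family of polynomial functions on `ℝⁿ` of degree at most `d`. -/
def PolyDeg (n d : ℕ) : Set (Vec n → ℝ) :=
  {V | ∃ p : MvPolynomial (Fin n) ℝ,
    p.totalDegree ≤ d ∧ ∀ x : Vec n, V x = MvPolynomial.eval (fun i => x i) p}

/-- The family `𝓟ⁿ_{d,l}` of continuous functions `V` on `ℝⁿ` such that, for some
polynomials `V₁, …, V_l` of degree at most `d`, `V(x) ∈ {V₁(x), …, V_l(x)}` for all `x`. -/
def PolyPiece (n d l : ℕ) : Set (Vec n → ℝ) :=
  {V | Continuous V ∧ ∃ W : Fin l → Vec n → ℝ,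
    (∀ i, W i ∈ PolyDeg n d) ∧ ∀ x : Vec n, ∃ i, V x = W i x}

open scoped Matrix

/-! Let `𝓜` be a bounded, uniformly exponentially stable set of `m × m` matrices and let
`E : ℝᵐ → ℝⁿ` have orthonormal columns. Letting every mode act as itself on the range of `E` and as
`-1` on its orthogonal complement gives an `n`-dimensional system whose trajectories are, by
uniqueness of fundamental matrices, those of `𝓜` on the range of `E` and `e^{-t}` on the
complement; so it is again uniformly exponentially stable. A common Lyapunov function `V` of it
restricts to the common Lyapunov function `V ∘ E` of `𝓜`, and precomposition with a linear map
keeps a piecewise polynomial function piecewise polynomial of the same degree. -/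

namespace MvPolynomial

variable {σ τ R : Type*} [CommSemiring R]

theorem totalDegree_bind₁_le {g : σ → MvPolynomial τ R} (hg : ∀ i, (g i).IsHomogeneous 1)
    (p : MvPolynomial σ R) : (bind₁ g p).totalDegree ≤ p.totalDegree := by
  conv_lhs => rw [← sum_homogeneousComponent p, map_sum]
  refine (totalDegree_finsetSum _ _).trans (Finset.sup_le fun k hk => ?_)
  calc (bind₁ g (homogeneousComponent k p)).totalDegree ≤ 1 * k :=
        ((homogeneousComponent_isHomogeneous k p).aeval g hg).totalDegree_le
    _ ≤ p.totalDegree := by simpa using Nat.lt_succ_iff.mp (Finset.mem_range.mp hk)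

end MvPolynomial

open MvPolynomial in
theorem mem_polyDeg_comp_toEuclideanLin {m n d : ℕ} {V : Vec n → ℝ} (hV : V ∈ PolyDeg n d)
    (E : Matrix (Fin n) (Fin m) ℝ) : (fun x => V (E.toEuclideanLin x)) ∈ PolyDeg m d := by
  obtain ⟨p, hpd, hpV⟩ := hV
  have hlin : ∀ j, (∑ i, C (E j i) * X i : MvPolynomial (Fin m) ℝ).IsHomogeneous 1 :=
    fun j => IsHomogeneous.sum _ _ _ fun i _ => isHomogeneous_C_mul_X _ _
  refine ⟨bind₁ (fun j => ∑ i, C (E j i) * X i) p, (totalDegree_bind₁_le hlin p).trans hpd,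
    fun x => ?_⟩
  dsimp only
  rw [hpV, eval, eval, eval₂Hom_bind₁]
  congr 2 with j
  simp [Matrix.toLpLin_apply, Matrix.mulVec, dotProduct]

theorem mem_polyPiece_comp_toEuclideanLin {m n d l : ℕ} {V : Vec n → ℝ}
    (hV : V ∈ PolyPiece n d l) (E : Matrix (Fin n) (Fin m) ℝ) :
    (fun x => V (E.toEuclideanLin x)) ∈ PolyPiece m d l := by
  obtain ⟨hVc, W, hW, hVW⟩ := hV
  exact ⟨hVc.comp (LinearMap.continuous_of_finiteDimensional _),
    fun i x => W i (E.toEuclideanLin x), fun i => mem_polyDeg_comp_toEuclideanLin (hW i) E,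
    fun x => hVW _⟩

/- `Mat m` carries the product topology and the topology of the sup norm made local above; they
agree, but only up to unfolding, so each of them is given its Borel structure explicitly. -/
local instance {m : ℕ} : BorelSpace (Mat m) := inferInstanceAs (BorelSpace (Fin m → Fin m → ℝ))

local instance {m : ℕ} : TopologicalSpace (Mat m) :=
  PseudoMetricSpace.toUniformSpace.toTopologicalSpace

local instance {m : ℕ} : BorelSpace (Mat m) := inferInstanceAs (BorelSpace (Fin m → Fin m → ℝ))

theorem Matrix.norm_mul_le_card_mul {l m k : Type*} [Fintype l] [Fintype m] [Fintype k]
    (X : Matrix l m ℝ) (Y : Matrix m k ℝ) : ‖X * Y‖ ≤ Fintype.card m * ‖X‖ * ‖Y‖ := by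
  rw [Matrix.norm_le_iff (by positivity)]
  intro i j
  calc ‖(X * Y) i j‖ ≤ ∑ k, ‖X i k‖ * ‖Y k j‖ := by
        simpa only [Matrix.mul_apply, norm_mul] using norm_sum_le _ fun k => X i k * Y k j
    _ ≤ ∑ _k : m, ‖X‖ * ‖Y‖ := by
        gcongr <;> exact Matrix.norm_entry_le_entrywise_sup_norm _
    _ = Fintype.card m * ‖X‖ * ‖Y‖ := by simp [mul_assoc]

theorem Matrix.norm_mul_le_of_norm_le {m : ℕ} {X : Mat m} {R : ℝ} (hX : ‖X‖ ≤ R) (Y : Mat m) :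
    ‖X * Y‖ ≤ m * R * ‖Y‖ := by
  simpa using (Matrix.norm_mul_le_card_mul X Y).trans (by gcongr; simp)

section FundamentalMatrix

variable {m : ℕ} {𝓜 : Set (Mat m)} {A Φ Φ₁ Φ₂ : ℝ → Mat m}

theorem IsSwitchingLaw.intervalIntegrable_mul (h𝓜 : Bornology.IsBounded 𝓜)
    (hA : IsSwitchingLaw 𝓜 A) (hΦ : ContinuousOn Φ (Ici 0)) {t : ℝ} (ht : 0 ≤ t) :
    IntervalIntegrable (fun s => A s * Φ s) volume 0 t := by
  obtain ⟨R, hR0, hR⟩ := h𝓜.exists_pos_norm_le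
  obtain ⟨B, hB⟩ := isCompact_Icc.exists_bound_of_continuousOn (hΦ.mono fun s hs => hs.1)
  have hΦ' : AEMeasurable Φ (volume.restrict (Ioc 0 t)) :=
    (hΦ.mono fun s hs => le_of_lt hs.1).aemeasurable measurableSet_Ioc
  have hmeas : AEStronglyMeasurable (fun s => A s * Φ s) (volume.restrict (Ioc 0 t)) :=
    ((continuous_fst.matrix_mul continuous_snd :
      Continuous fun p : Mat m × Mat m => p.1 * p.2).measurable.comp_aemeasurable
      (hA.1.aemeasurable.prodMk hΦ')).aestronglyMeasurable
  rw [intervalIntegrable_iff_integrableOn_Ioc_of_le ht]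
  refine Integrable.mono' (integrableOn_const (C := m * R * B) measure_Ioc_lt_top.ne) hmeas ?_
  filter_upwards [ae_restrict_mem measurableSet_Ioc] with s hs
  calc ‖A s * Φ s‖ ≤ m * R * ‖Φ s‖ := Matrix.norm_mul_le_of_norm_le (hR _ (hA.2 s hs.1.le)) _
    _ ≤ m * R * B := by gcongr; exact hB s (Ioc_subset_Icc_self hs)

theorem eqOn_zero_of_le_mul_integral {g : ℝ → ℝ} {K : ℝ} (hg : ContinuousOn g (Ici 0))
    (hg0 : ∀ t, 0 ≤ g t) (h : ∀ t, 0 ≤ t → g t ≤ K * ∫ s in (0:ℝ)..t, g s) :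
    EqOn g 0 (Ici 0) := by
  intro T (hT : 0 ≤ T)
  set G : ℝ → ℝ := fun t => ∫ s in (0:ℝ)..t, g s
  have hint : ∀ t ∈ Icc 0 T, IntervalIntegrable g volume 0 t := fun t ht =>
    (hg.mono (uIcc_of_le ht.1 ▸ Icc_subset_Ici_self)).intervalIntegrable
  have hG0 : ∀ t, 0 ≤ t → 0 ≤ G t := fun t ht =>
    intervalIntegral.integral_nonneg ht fun s _ => hg0 s
  have hGcont : ContinuousOn G (Icc 0 T) := by
    simpa only [uIcc_of_le hT] using intervalIntegral.continuousOn_primitive_interval'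
      (hint T ⟨hT, le_rfl⟩) (left_mem_uIcc (a := 0) (b := T))
  have hderiv : ∀ t ∈ Ico 0 T, HasDerivWithinAt G (g t) (Ici t) t := by
    intro t ht
    have hsub : Ioi t ⊆ Ici 0 := fun s hs => ht.1.trans (le_of_lt hs)
    exact intervalIntegral.integral_hasDerivWithinAt_right (hint t (Ico_subset_Icc_self ht))
      ((hg.mono hsub).stronglyMeasurableAtFilter_nhdsWithin measurableSet_Ioi t)
      ((hg t ht.1).mono hsub)
  have hGT : ‖G T‖ ≤ gronwallBound 0 K 0 (T - 0) :=
    norm_le_gronwallBound_of_norm_deriv_right_le hGcont hderiv (by simp [G]) (fun t ht => by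
      simpa [abs_of_nonneg (hg0 t), abs_of_nonneg (hG0 t ht.1)] using h t ht.1) T ⟨hT, le_rfl⟩
  rw [gronwallBound_ε0_δ0, norm_le_zero_iff] at hGT
  exact le_antisymm (by simpa [G, hGT] using h T hT) (hg0 T)

theorem IsFundamentalMatrix.eqOn (h𝓜 : Bornology.IsBounded 𝓜) (hA : IsSwitchingLaw 𝓜 A)
    (hΦ₁ : IsFundamentalMatrix A Φ₁) (hΦ₂ : IsFundamentalMatrix A Φ₂) : EqOn Φ₁ Φ₂ (Ici 0) := by
  obtain ⟨R, -, hR⟩ := h𝓜.exists_pos_norm_le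
  set D := fun s => Φ₁ s - Φ₂ s
  have hD : ContinuousOn D (Ici 0) := hΦ₁.1.sub hΦ₂.1
  have hD_eq : ∀ t, 0 ≤ t → D t = ∫ s in (0:ℝ)..t, A s * D s := by
    intro t ht
    simp only [D, Matrix.mul_sub]
    rw [intervalIntegral.integral_sub (hA.intervalIntegrable_mul h𝓜 hΦ₁.1 ht)
      (hA.intervalIntegrable_mul h𝓜 hΦ₂.1 ht), hΦ₁.2 t ht, hΦ₂.2 t ht]
    abel
  have hD_le : ∀ t, 0 ≤ t → ‖D t‖ ≤ (m * R) * ∫ s in (0:ℝ)..t, ‖D s‖ := by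
    intro t ht
    rw [hD_eq t ht, ← intervalIntegral.integral_const_mul]
    refine intervalIntegral.norm_integral_le_of_norm_le ht (ae_of_all _ fun s hs => ?_)
      ((hD.norm.mono (uIcc_of_le ht ▸ Icc_subset_Ici_self)).intervalIntegrable.const_mul _)
    exact Matrix.norm_mul_le_of_norm_le (hR _ (hA.2 s hs.1.le)) _
  intro t ht
  exact sub_eq_zero.1 <| norm_eq_zero.1 <|
    eqOn_zero_of_le_mul_integral hD.norm (fun _ => norm_nonneg _) hD_le ht

theorem IsFundamentalMatrix.congr_law {A₁ A₂ : ℝ → Mat m} (hΦ : IsFundamentalMatrix A₁ Φ)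
    (h : EqOn A₁ A₂ (Ici 0)) : IsFundamentalMatrix A₂ Φ := by
  refine ⟨hΦ.1, fun t ht => (hΦ.2 t ht).trans ?_⟩
  congr 1
  refine intervalIntegral.integral_congr fun s hs => ?_
  simp only [h (uIcc_of_le ht ▸ hs).1]

end FundamentalMatrix

theorem intervalIntegral.integral_prodMk {F G : Type*} [NormedAddCommGroup F] [NormedSpace ℝ F]
    [NormedAddCommGroup G] [NormedSpace ℝ G] [CompleteSpace F] [CompleteSpace G]
    {f : ℝ → F} {g : ℝ → G} {a b : ℝ}
    (hf : IntervalIntegrable f volume a b) (hg : IntervalIntegrable g volume a b) :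
    ∫ x in a..b, (f x, g x) = (∫ x in a..b, f x, ∫ x in a..b, g x) := by
  have hfg : IntervalIntegrable (fun x => (f x, g x)) volume a b :=
    ⟨hf.1.prodMk hg.1, hf.2.prodMk hg.2⟩
  exact Prod.ext ((ContinuousLinearMap.fst ℝ F G).intervalIntegral_comp_comm hfg).symm
    ((ContinuousLinearMap.snd ℝ F G).intervalIntegral_comp_comm hfg).symm

section Embedding

variable {m n : ℕ} (E : Matrix (Fin n) (Fin m) ℝ)

/-- For `E` with orthonormal columns, `blockExtend E (M, c)` acts as `M` on the range of `E`
and as `c • 1` on its orthogonal complement. -/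
def blockExtend : Mat m × ℝ →L[ℝ] Mat n :=
  LinearMap.toContinuousLinearMap
    { toFun := fun p => E * p.1 * Eᵀ + p.2 • (1 - E * Eᵀ)
      map_add' := fun p q => by
        simp only [Prod.fst_add, Prod.snd_add, Matrix.mul_add, Matrix.add_mul, add_smul]
        abel
      map_smul' := fun r p => by
        simp only [Prod.smul_fst, Prod.smul_snd, Matrix.mul_smul, Matrix.smul_mul, smul_add,
          smul_smul, smul_eq_mul, RingHom.id_apply] }

def compress : Mat n →L[ℝ] Mat m :=
  LinearMap.toContinuousLinearMap
    { toFun := fun P => Eᵀ * P * E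
      map_add' := fun P Q => by simp only [Matrix.mul_add, Matrix.add_mul]
      map_smul' := fun r P => by simp only [Matrix.mul_smul, Matrix.smul_mul, RingHom.id_apply] }

def blockExtendSet (𝓜 : Set (Mat m)) : Set (Mat n) := (fun M => blockExtend E (M, -1)) '' 𝓜

variable {E} {𝓜 : Set (Mat m)}

theorem blockExtend_apply (M : Mat m) (c : ℝ) :
    blockExtend E (M, c) = E * M * Eᵀ + c • (1 - E * Eᵀ) := rfl

theorem compress_apply (P : Mat n) : compress E P = Eᵀ * P * E := rfl

theorem blockExtend_one_one : blockExtend E (1, 1) = 1 := by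
  simp [blockExtend_apply]

theorem Bornology.IsBounded.blockExtendSet (h𝓜 : Bornology.IsBounded 𝓜) :
    Bornology.IsBounded (blockExtendSet E 𝓜) :=
  ((blockExtend E).lipschitz.isBounded_image (h𝓜.prod Bornology.isBounded_singleton)).subset
    (by rintro _ ⟨M, hM, rfl⟩; exact ⟨(M, -1), ⟨hM, rfl⟩, rfl⟩)

theorem IsSwitchingLaw.blockExtend {A : ℝ → Mat m} (hA : IsSwitchingLaw 𝓜 A) :
    IsSwitchingLaw (blockExtendSet E 𝓜) (fun s => blockExtend E (A s, -1)) :=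
  ⟨(_root_.blockExtend E).continuous.measurable.comp (hA.1.prodMk measurable_const),
    fun s hs => mem_image_of_mem _ (hA.2 s hs)⟩

variable (hE : Eᵀ * E = 1)
include hE

theorem transpose_mul_blockExtend (M : Mat m) (c : ℝ) :
    Eᵀ * blockExtend E (M, c) = M * Eᵀ := by
  simp [blockExtend_apply, Matrix.mul_add, Matrix.mul_sub, ← Matrix.mul_assoc, hE]

theorem blockExtend_mul_self (M : Mat m) (c : ℝ) : blockExtend E (M, c) * E = E * M := by
  simp [blockExtend_apply, Matrix.add_mul, Matrix.sub_mul, Matrix.mul_assoc, hE]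

theorem blockExtend_mul_blockExtend (M N : Mat m) (c e : ℝ) :
    blockExtend E (M, c) * blockExtend E (N, e) = blockExtend E (M * N, c * e) := by
  have hcompl : blockExtend E (M, c) * (1 - E * Eᵀ) = c • (1 - E * Eᵀ) := by
    rw [Matrix.mul_sub, Matrix.mul_one, ← Matrix.mul_assoc, blockExtend_mul_self hE,
      blockExtend_apply]
    abel
  rw [blockExtend_apply N, Matrix.mul_add, Matrix.mul_smul, hcompl, ← Matrix.mul_assoc,
    ← Matrix.mul_assoc, blockExtend_mul_self hE, smul_smul, mul_comm e c, blockExtend_apply,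
    Matrix.mul_assoc E M N]

theorem compress_blockExtend (M : Mat m) (c : ℝ) : compress E (blockExtend E (M, c)) = M := by
  rw [compress_apply, transpose_mul_blockExtend hE, Matrix.mul_assoc, hE, Matrix.mul_one]

theorem blockExtend_compress_of_mem {M : Mat n} (hM : M ∈ blockExtendSet E 𝓜) :
    blockExtend E (compress E M, -1) = M := by
  obtain ⟨N, -, rfl⟩ := hM
  rw [compress_blockExtend hE]

theorem transpose_mul_of_mem_blockExtendSet {M : Mat n} (hM : M ∈ blockExtendSet E 𝓜) :
    Eᵀ * M = compress E M * Eᵀ := by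
  obtain ⟨N, -, rfl⟩ := hM
  rw [compress_blockExtend hE, transpose_mul_blockExtend hE]

theorem act_blockExtend_toEuclideanLin (M : Mat m) (c : ℝ) (x : Vec m) :
    (blockExtend E (M, c)).act (E.toEuclideanLin x) = E.toEuclideanLin (M.act x) := by
  simp only [Mat.act, ← LinearMap.comp_apply, ← Matrix.toLpLin_mul_same, blockExtend_mul_self hE]

theorem toEuclideanLin_injective_of_transpose_mul_eq_one :
    Function.Injective E.toEuclideanLin := by
  refine Function.LeftInverse.injective (g := Eᵀ.toEuclideanLin) fun x => ?_
  rw [← LinearMap.comp_apply, ← Matrix.toLpLin_mul_same, hE, Matrix.toLpLin_one,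
    LinearMap.id_apply]

theorem isFundamentalMatrix_blockExtend {A Φ : ℝ → Mat m}
    (h𝓜 : Bornology.IsBounded 𝓜) (hA : IsSwitchingLaw 𝓜 A) (hΦ : IsFundamentalMatrix A Φ) :
    IsFundamentalMatrix (fun s => blockExtend E (A s, -1))
      (fun t => blockExtend E (Φ t, Real.exp (-t))) := by
  refine ⟨(blockExtend E).continuous.comp_continuousOn
    (hΦ.1.prodMk (by fun_prop : Continuous fun t => Real.exp (-t)).continuousOn),
    fun t ht => ?_⟩
  have hint := hA.intervalIntegrable_mul h𝓜 hΦ.1 ht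
  have hexp : IntervalIntegrable (fun s => -Real.exp (-s)) volume 0 t :=
    (by fun_prop : Continuous fun s => -Real.exp (-s)).intervalIntegrable 0 t
  have hexp_eq : ∫ s in (0:ℝ)..t, -Real.exp (-s) = Real.exp (-t) - 1 := by
    rw [intervalIntegral.integral_neg, intervalIntegral.integral_comp_neg Real.exp]
    simp
  simp only [blockExtend_mul_blockExtend hE, neg_one_mul]
  rw [(blockExtend E).intervalIntegral_comp_comm ⟨hint.1.prodMk hexp.1, hint.2.prodMk hexp.2⟩,
    intervalIntegral.integral_prodMk hint hexp, hexp_eq, ← blockExtend_one_one (E := E),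
    ← map_add, Prod.mk_add_mk, ← hΦ.2 t ht, add_sub_cancel]

theorem isFundamentalMatrix_compress {𝓜' : Set (Mat n)} {A' Φ' : ℝ → Mat n} {A : ℝ → Mat m}
    (h𝓜' : Bornology.IsBounded 𝓜') (hA' : IsSwitchingLaw 𝓜' A')
    (hAA' : ∀ s, 0 ≤ s → Eᵀ * A' s = A s * Eᵀ) (hΦ' : IsFundamentalMatrix A' Φ') :
    IsFundamentalMatrix A (fun t => compress E (Φ' t)) := by
  refine ⟨(compress E).continuous.comp_continuousOn hΦ'.1, fun t ht => ?_⟩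
  dsimp only
  rw [hΦ'.2 t ht, map_add, compress_apply 1, Matrix.mul_one, hE,
    ← (compress E).intervalIntegral_comp_comm (hA'.intervalIntegrable_mul h𝓜' hΦ'.1 ht)]
  congr 1
  refine intervalIntegral.integral_congr fun s hs => ?_
  simp only [compress_apply, ← Matrix.mul_assoc, hAA' s (uIcc_of_le ht ▸ hs).1]

theorem IsSwitchingLaw.compress {A' : ℝ → Mat n}
    (hA' : IsSwitchingLaw (blockExtendSet E 𝓜) A') :
    IsSwitchingLaw 𝓜 (fun s => compress E (A' s)) := by
  refine ⟨(_root_.compress E).continuous.measurable.comp hA'.1, fun s hs => ?_⟩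
  obtain ⟨M, hM, hM'⟩ := hA'.2 s hs
  simpa only [← hM', compress_blockExtend hE] using hM

theorem UniformlyExpStable.blockExtendSet (h𝓜 : Bornology.IsBounded 𝓜)
    (hs : UniformlyExpStable 𝓜) : UniformlyExpStable (blockExtendSet E 𝓜) := by
  obtain ⟨C, hC, γ, hγ, hbound⟩ := hs
  refine ⟨(‖blockExtend E‖ + 1) * (C + 1), by positivity, min γ 1, lt_min hγ one_pos,
    fun A' Φ' hA' hΦ' t ht => ?_⟩
  have hA := hA'.compress hE
  have hΨ := isFundamentalMatrix_compress hE h𝓜.blockExtendSet hA'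
    (fun s hs => transpose_mul_of_mem_blockExtendSet hE (hA'.2 s hs)) hΦ'
  have hΦ'_eq : EqOn Φ' (fun t => blockExtend E (compress E (Φ' t), Real.exp (-t))) (Ici 0) :=
    hΦ'.eqOn h𝓜.blockExtendSet hA' <| (isFundamentalMatrix_blockExtend hE h𝓜 hA hΨ).congr_law
      fun s hs => blockExtend_compress_of_mem hE (hA'.2 s hs)
  have hγt : Real.exp (-γ * t) ≤ Real.exp (-min γ 1 * t) := by
    have := min_le_left γ 1
    gcongr
  have h1t : Real.exp (-t) ≤ Real.exp (-min γ 1 * t) := by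
    have := min_le_right γ 1
    gcongr
    nlinarith
  have hpair : ‖(compress E (Φ' t), Real.exp (-t))‖ ≤ (C + 1) * Real.exp (-min γ 1 * t) := by
    refine norm_prod_le_iff.2 ⟨?_, ?_⟩
    · calc ‖compress E (Φ' t)‖ ≤ C * Real.exp (-γ * t) := hbound _ _ hA hΨ t ht
        _ ≤ (C + 1) * Real.exp (-min γ 1 * t) := by gcongr; linarith
    · rw [Real.norm_of_nonneg (Real.exp_nonneg _)]
      nlinarith [Real.exp_nonneg (-min γ 1 * t)]
  calc ‖Φ' t‖ = ‖blockExtend E (compress E (Φ' t), Real.exp (-t))‖ :=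
        congrArg norm (hΦ'_eq ht)
    _ ≤ ‖blockExtend E‖ * ‖(compress E (Φ' t), Real.exp (-t))‖ := (blockExtend E).le_opNorm _
    _ ≤ (‖blockExtend E‖ + 1) * ((C + 1) * Real.exp (-min γ 1 * t)) := by
        gcongr
        linarith
    _ = _ := by ring

theorem IsCLF.comp_toEuclideanLin (h𝓜 : Bornology.IsBounded 𝓜) {V : Vec n → ℝ}
    (hV : IsCLF (blockExtendSet E 𝓜) V) : IsCLF 𝓜 (fun x => V (E.toEuclideanLin x)) := by
  obtain ⟨⟨hVc, hV0, hV00, hVpos, hVmono⟩, hVstrict⟩ := hV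
  have hEx : ∀ {x}, x ≠ 0 → E.toEuclideanLin x ≠ 0 :=
    fun hx => (map_ne_zero_iff _ (toEuclideanLin_injective_of_transpose_mul_eq_one hE)).2 hx
  refine ⟨⟨hVc.comp (LinearMap.continuous_of_finiteDimensional _), fun x => hV0 _,
    by simpa using hV00, fun x hx => hVpos _ (hEx hx), fun A Φ hA hΦ x₀ => ?_⟩,
    fun A Φ hA hΦ x₀ hx₀ => ?_⟩
  · simpa only [act_blockExtend_toEuclideanLin hE] using
      hVmono _ _ hA.blockExtend (isFundamentalMatrix_blockExtend hE h𝓜 hA hΦ) (E.toEuclideanLin x₀)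
  · simpa only [act_blockExtend_toEuclideanLin hE] using
      hVstrict _ _ hA.blockExtend (isFundamentalMatrix_blockExtend hE h𝓜 hA hΦ) _ (hEx hx₀)

theorem IsUniversalClass.of_comp_toEuclideanLin {P : Set (Vec n → ℝ)} {Q : Set (Vec m → ℝ)}
    (hP : IsUniversalClass P) (hPQ : ∀ V ∈ P, (fun x => V (E.toEuclideanLin x)) ∈ Q) :
    IsUniversalClass Q := by
  intro 𝓜 h𝓜 hs
  obtain ⟨V, hVP, hV⟩ := hP _ h𝓜.blockExtendSet (hs.blockExtendSet hE h𝓜)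
  exact ⟨_, hPQ V hVP, hV.comp_toEuclideanLin hE h𝓜⟩

end Embedding

theorem transpose_mul_submatrix_one_castLE {m n : ℕ} (hmn : m ≤ n) :
    ((1 : Mat n).submatrix id (Fin.castLE hmn))ᵀ * (1 : Mat n).submatrix id (Fin.castLE hmn) =
      1 := by
  rw [Matrix.transpose_submatrix, Matrix.transpose_one,
    ← Matrix.submatrix_mul _ _ _ _ _ Function.bijective_id, Matrix.one_mul,
    Matrix.submatrix_one _ (Fin.castLE_injective hmn)]

theorem IsUniversalClass.polyPiece_of_le {m n d l : ℕ} (hmn : m ≤ n)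
    (h : IsUniversalClass (PolyPiece n d l)) : IsUniversalClass (PolyPiece m d l) :=
  h.of_comp_toEuclideanLin (transpose_mul_submatrix_one_castLE hmn)
    fun _ hV => mem_polyPiece_comp_toEuclideanLin hV _

theorem polyPiece_universal_dim_two_of_universal_general {n : ℕ} (hn : 2 ≤ n) (d l : ℕ)
    (huniv : IsUniversalClass (PolyPiece n d l)) :
    IsUniversalClass (PolyPiece 2 d l) :=
  huniv.polyPiece_of_le hn

/-- If the class `𝓟ⁿ_{d,l}` is universal for `n`-dimensional switched
systems (`n ≥ 2`), then `𝓟²_{d,l}` is universal for `2`-dimensional switched systems. -/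
theorem polyPiece_universal_dim_two_of_universal {n : ℕ} (hn : 2 ≤ n) (d l : ℕ)
    (hd : 1 ≤ d) (hl : 1 ≤ l)
    (huniv : IsUniversalClass (PolyPiece n d l)) :
    IsUniversalClass (PolyPiece 2 d l) :=
  polyPiece_universal_dim_two_of_universal_general hn d l huniv

end
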